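/- arXiv:1907.13180 — 2 statements merged into one kernel-verified Lean document; each statement's English description precedes it below -/
import Mathlib

section
/- For a nonempty compact set K ⊆ ℝ^d, any p ≥ 1, and any norm ‖·‖ on ℝ^d, the convex envelope of the function W(η) = dist^p(η, K) is W^co(η) = dist^p(η, conv K). -/
open Set

/-- `N` is a norm on the real vector space `V`. -/
def IsNorm {V : Type*} [AddCommGroup V] [Module ℝ V] (N : V → ℝ) : Prop :=
  (∀ x y, N (x + y) ≤ N x + N y) ∧ (∀ (a : ℝ) (x : V), N (a • x) = |a| * N x) ∧
    (∀ x, N x = 0 ↔ x = 0)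

/-- Distance of a point to a set, measured in the norm `N`. -/
noncomputable def distTo {V : Type*} [AddCommGroup V] [Module ℝ V]
    (N : V → ℝ) (K : Set V) (x : V) : ℝ :=
  sInf ((fun k => N (x - k)) '' K)

/-- `g` is the convex envelope of `W`: the largest convex function below `W`. -/
def IsConvexEnv {V : Type*} [AddCommGroup V] [Module ℝ V] (W g : V → ℝ) : Prop :=
  ConvexOn ℝ Set.univ g ∧ g ≤ W ∧
    ∀ h : V → ℝ, ConvexOn ℝ Set.univ h → h ≤ W → h ≤ g

/-!
`dist(·, conv K)^p` is convex, as an increasing convex function of the convex function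
`dist(·, conv K)`, and lies below `W` because `K ⊆ conv K`. For maximality, let `h ≤ W` be
convex and `k ∈ conv K`. For `z ∈ K` we have `dist(η - k + z, K) ≤ ‖η - k‖`, so the convex
sublevel set `{y | h (η - k + y) ≤ ‖η - k‖^p}` contains `K`, hence `k`: `h η ≤ ‖η - k‖^p`.
Taking the infimum over `k ∈ conv K` gives `h η ≤ dist(η, conv K)^p`.
-/

theorem ConvexOn.rpow {E : Type*} [AddCommGroup E] [Module ℝ E] {s : Set E} {f : E → ℝ}
    (hf : ConvexOn ℝ s f) (hf₀ : ∀ x ∈ s, 0 ≤ f x) {p : ℝ} (hp : 1 ≤ p) :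
    ConvexOn ℝ s (fun x => f x ^ p) := by
  refine ⟨hf.1, fun x hx y hy a b ha hb hab => ?_⟩
  calc f (a • x + b • y) ^ p ≤ (a • f x + b • f y) ^ p :=
        Real.rpow_le_rpow (hf₀ _ (hf.1 hx hy ha hb hab)) (hf.2 hx hy ha hb hab) (by linarith)
    _ ≤ a • f x ^ p + b • f y ^ p :=
        (convexOn_rpow hp).2 (hf₀ x hx) (hf₀ y hy) ha hb hab

theorem ConvexOn.add_le_of_mem_convexHull {𝕜 E β : Type*} [Field 𝕜] [LinearOrder 𝕜]
    [IsStrictOrderedRing 𝕜] [AddCommGroup E] [Module 𝕜 E] [AddCommMonoid β] [PartialOrder β]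
    [IsOrderedAddMonoid β] [Module 𝕜 β] [PosSMulMono 𝕜 β] {h : E → β}
    (hh : ConvexOn 𝕜 univ h) {K : Set E} {x : E} {c : β} (hK : ∀ z ∈ K, h (x + z) ≤ c)
    {y : E} (hy : y ∈ convexHull 𝕜 K) : h (x + y) ≤ c :=
  (convexHull_min (t := {z ∈ (x + ·) ⁻¹' univ | (h ∘ (x + ·)) z ≤ c})
    (fun z hz => ⟨trivial, hK z hz⟩) ((hh.translate_right x).convex_le c) hy).2

section distTo

variable {V : Type*} [AddCommGroup V] [Module ℝ V] {N : V → ℝ}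

theorem IsNorm.nonneg (hN : IsNorm N) (x : V) : 0 ≤ N x := by
  have h0 : N 0 = 0 := by simpa using hN.2.1 0 0
  have h := hN.1 x (-x)
  rw [add_neg_cancel, h0, ← neg_one_smul ℝ x, hN.2.1] at h
  norm_num at h
  linarith

theorem distTo_bddBelow (hN : IsNorm N) (K : Set V) (x : V) :
    BddBelow ((fun k => N (x - k)) '' K) :=
  ⟨0, by rintro _ ⟨k, -, rfl⟩; exact hN.nonneg _⟩

theorem distTo_nonneg (hN : IsNorm N) {K : Set V} (hK : K.Nonempty) (x : V) :
    0 ≤ distTo N K x :=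
  le_csInf (hK.image _) (by rintro _ ⟨k, -, rfl⟩; exact hN.nonneg _)

theorem distTo_le (hN : IsNorm N) {K : Set V} {k : V} (hk : k ∈ K) (x : V) :
    distTo N K x ≤ N (x - k) :=
  csInf_le (distTo_bddBelow hN K x) ⟨k, hk, rfl⟩

theorem distTo_anti (hN : IsNorm N) {K L : Set V} (hK : K.Nonempty) (hKL : K ⊆ L) (x : V) :
    distTo N L x ≤ distTo N K x :=
  csInf_le_csInf (distTo_bddBelow hN L x) (hK.image _) (image_mono hKL)

theorem distTo_rpow (hN : IsNorm N) {K : Set V} (hK : K.Nonempty) {p : ℝ} (hp : 0 ≤ p)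
    (x : V) : distTo N K x ^ p = sInf ((fun k => N (x - k) ^ p) '' K) := by
  have hmono : MonotoneOn (fun t : ℝ => t ^ p) ((fun k => N (x - k)) '' K) := by
    rintro _ ⟨k, -, rfl⟩ _ ⟨l, -, rfl⟩ hkl
    exact Real.rpow_le_rpow (hN.nonneg _) hkl hp
  rw [distTo, hmono.map_csInf_of_continuousWithinAt
    (Real.continuousAt_rpow_const _ _ (Or.inr hp)).continuousWithinAt (hK.image _)
    (distTo_bddBelow hN K x), image_image]

theorem distTo_convexOn (hN : IsNorm N) {C : Set V} (hC : Convex ℝ C) (hCne : C.Nonempty) :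
    ConvexOn ℝ univ (distTo N C) := by
  refine ⟨convex_univ, fun x _ y _ a b ha hb hab => le_of_forall_pos_le_add fun ε hε => ?_⟩
  obtain ⟨_, ⟨kx, hkx, rfl⟩, hx⟩ := Real.lt_sInf_add_pos (hCne.image (fun k => N (x - k))) hε
  obtain ⟨_, ⟨ky, hky, rfl⟩, hy⟩ := Real.lt_sInf_add_pos (hCne.image (fun k => N (y - k))) hε
  calc distTo N C (a • x + b • y) ≤ N (a • x + b • y - (a • kx + b • ky)) :=
        distTo_le hN (hC hkx hky ha hb hab) _
    _ = N (a • (x - kx) + b • (y - ky)) := by congr 1; module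
    _ ≤ N (a • (x - kx)) + N (b • (y - ky)) := hN.1 _ _
    _ = a * N (x - kx) + b * N (y - ky) := by
        rw [hN.2.1, hN.2.1, abs_of_nonneg ha, abs_of_nonneg hb]
    _ ≤ a * (distTo N C x + ε) + b * (distTo N C y + ε) := by
        gcongr
        · exact hx.le
        · exact hy.le
    _ = a • distTo N C x + b • distTo N C y + ε := by
        simp only [smul_eq_mul]; linear_combination ε * hab

end distTo

theorem stmt5_general {d : ℕ} (K : Set (Fin d → ℝ))
    (hKne : K.Nonempty)
    (N : (Fin d → ℝ) → ℝ) (hN : IsNorm N)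
    (p : ℝ) (hp : 1 ≤ p)
    (W : (Fin d → ℝ) → ℝ) (hW : ∀ η, W η = distTo N K η ^ p) :
    IsConvexEnv W (fun η => distTo N (convexHull ℝ K) η ^ p) := by
  have hp₀ : 0 ≤ p := by linarith
  have hCne : (convexHull ℝ K).Nonempty := hKne.mono (subset_convexHull ℝ K)
  refine ⟨?_, fun η => ?_, fun h hh hhW η => ?_⟩
  · exact (distTo_convexOn hN (convex_convexHull ℝ K) hCne).rpow
      (fun x _ => distTo_nonneg hN hCne x) hp
  · rw [hW]
    exact Real.rpow_le_rpow (distTo_nonneg hN hCne η)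
      (distTo_anti hN hKne (subset_convexHull ℝ K) η) hp₀
  · dsimp only
    rw [distTo_rpow hN hCne hp₀]
    refine le_csInf (hCne.image _) ?_
    rintro _ ⟨k, hk, rfl⟩
    have htranslate : ∀ z ∈ K, h (η - k + z) ≤ N (η - k) ^ p := fun z hz =>
      calc h (η - k + z) ≤ distTo N K (η - k + z) ^ p := (hhW _).trans_eq (hW _)
        _ ≤ N (η - k) ^ p := by
          gcongr
          · exact distTo_nonneg hN hKne _
          · simpa using distTo_le hN hz (η - k + z)
    simpa using hh.add_le_of_mem_convexHull htranslate hk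

theorem stmt5 {d : ℕ} (K : Set (Fin d → ℝ))
    (hKne : K.Nonempty) (hKc : IsCompact K)
    (N : (Fin d → ℝ) → ℝ) (hN : IsNorm N)
    (p : ℝ) (hp : 1 ≤ p)
    (W : (Fin d → ℝ) → ℝ) (hW : ∀ η, W η = distTo N K η ^ p) :
    IsConvexEnv W (fun η => distTo N (convexHull ℝ K) η ^ p) :=
  stmt5_general K hKne N hN p hp W hW
end

section
/- Let K = ∂B₁¹(0,0) = {(ξ,ζ) ∈ ℝ × ℝ : |ξ| + |ζ| = 1}. Then the diagonalization K̂ = {(ξ,ζ) ∈ K : (ξ,ξ), (ζ,ζ) ∈ K} equals the four points {−1/2, 1/2} × {−1/2, 1/2}, and the separately convex hull of K equals its convex hull: K^sc = K^co = {(ξ,ζ) : |ξ| + |ζ| ≤ 1}. -/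
open Set

def SepConvex {V : Type*} [AddCommGroup V] [Module ℝ V] (E : Set (V × V)) : Prop :=
  ∀ t : ℝ, t ∈ Set.Ioo (0 : ℝ) 1 → ∀ p ∈ E, ∀ q ∈ E, (p.1 = q.1 ∨ p.2 = q.2) →
    t • p + (1 - t) • q ∈ E

def sepConvexHull {V : Type*} [AddCommGroup V] [Module ℝ V]
    (E : Set (V × V)) : Set (V × V) :=
  ⋂₀ {F | SepConvex F ∧ E ⊆ F}

/-- The diagonalization of a set `E ⊆ V × V`. -/
def diagSet {V : Type*} (E : Set (V × V)) : Set (V × V) :=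
  {p ∈ E | (p.1, p.1) ∈ E ∧ (p.2, p.2) ∈ E}

lemma subset_sepConvexHull {V : Type*} [AddCommGroup V] [Module ℝ V] (E : Set (V × V)) :
    E ⊆ sepConvexHull E := fun p hp => by
  intro F hF; exact hF.2 hp

lemma sepConvex_sepConvexHull {V : Type*} [AddCommGroup V] [Module ℝ V] (E : Set (V × V)) :
    SepConvex (sepConvexHull E) := by
  intro t ht p hp q hq h F hF
  exact hF.1 t ht p (hp F hF) q (hq F hF) h

theorem stmt17 (K : Set (ℝ × ℝ)) (hK : K = {q : ℝ × ℝ | |q.1| + |q.2| = 1}) :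
    diagSet K = ({-1/2, 1/2} : Set ℝ) ×ˢ ({-1/2, 1/2} : Set ℝ) ∧
    sepConvexHull K = convexHull ℝ K ∧
    convexHull ℝ K = {q : ℝ × ℝ | |q.1| + |q.2| ≤ 1} := by
  subst hK
  set K : Set (ℝ × ℝ) := {q : ℝ × ℝ | |q.1| + |q.2| = 1} with hKdef
  -- the ball
  have hballconv : Convex ℝ {q : ℝ × ℝ | |q.1| + |q.2| ≤ 1} := by
    intro p hp q hq a b ha hb hab
    simp only [mem_setOf_eq, Prod.fst_add, Prod.snd_add, Prod.smul_fst, Prod.smul_snd,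
      smul_eq_mul] at *
    have h1 := abs_add_le (a * p.1) (b * q.1)
    have h2 := abs_add_le (a * p.2) (b * q.2)
    rw [abs_mul, abs_mul, abs_of_nonneg ha] at h1
    rw [abs_mul, abs_mul, abs_of_nonneg ha] at h2
    rw [abs_of_nonneg hb] at h1 h2
    nlinarith [abs_nonneg p.1, abs_nonneg q.1, abs_nonneg p.2, abs_nonneg q.2]
  -- ball ⊆ sepConvexHull K
  have hball : {q : ℝ × ℝ | |q.1| + |q.2| ≤ 1} ⊆ sepConvexHull K := by
    rintro ⟨x, y⟩ hxy
    simp only [mem_setOf_eq] at hxy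
    set r : ℝ := 1 - |y| with hr
    have hxr : |x| ≤ r := by simp only [hr]; linarith
    have hr0 : 0 ≤ r := le_trans (abs_nonneg x) hxr
    rcases eq_or_lt_of_le hr0 with hr0' | hrpos
    · have hx0 : x = 0 := abs_nonpos_iff.mp (by linarith [hxr, hr0'.symm])
      apply subset_sepConvexHull
      simp only [hKdef, mem_setOf_eq, hx0, abs_zero]
      linarith [hr0'.symm ▸ hr]
    · have hK1 : ((r, y) : ℝ × ℝ) ∈ K := by
        simp only [hKdef, mem_setOf_eq, abs_of_nonneg hr0]; linarith
      have hK2 : ((-r, y) : ℝ × ℝ) ∈ K := by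
        simp only [hKdef, mem_setOf_eq, abs_neg, abs_of_nonneg hr0]; linarith
      set t : ℝ := (x + r) / (2 * r) with htdef
      have h2r : (0:ℝ) < 2 * r := by linarith
      have ht0 : 0 ≤ t := div_nonneg (by cases abs_le.mp hxr; linarith) (le_of_lt h2r)
      have ht1 : t ≤ 1 := by
        rw [div_le_one h2r]; cases abs_le.mp hxr; linarith
      have heq : t • ((r, y) : ℝ × ℝ) + (1 - t) • ((-r, y) : ℝ × ℝ) = (x, y) := by
        have : t * r + (1 - t) * (-r) = x := by
          have hk : t * (2 * r) = x + r := by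
            rw [htdef]; exact div_mul_cancel₀ _ (ne_of_gt h2r)
          linear_combination hk
        simp only [Prod.smul_mk, smul_eq_mul, Prod.mk_add_mk]
        rw [this]
        congr 1
        ring
      rcases eq_or_lt_of_le ht0 with ht0' | ht0pos
      · have : x = -r := by
          have := abs_le.mp hxr
          have h : x + r = 0 := by
            by_contra hc
            have : t ≠ 0 := by
              simp only [htdef, div_ne_zero_iff]; exact ⟨hc, ne_of_gt h2r⟩
            exact this ht0'.symm
          linarith
        rw [this]; exact subset_sepConvexHull _ hK2
      rcases eq_or_lt_of_le ht1 with ht1' | ht1lt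
      · have : x = r := by
          have h : x + r = 2 * r := by
            have := (div_eq_one_iff_eq (ne_of_gt h2r)).mp ht1'
            linarith [this]
          linarith
        rw [this]; exact subset_sepConvexHull _ hK1
      · rw [← heq]
        exact sepConvex_sepConvexHull K t ⟨ht0pos, ht1lt⟩ _
          (subset_sepConvexHull _ hK1) _ (subset_sepConvexHull _ hK2) (Or.inr rfl)
  have hKball : K ⊆ {q : ℝ × ℝ | |q.1| + |q.2| ≤ 1} := fun q hq => le_of_eq hq
  have hsub : sepConvexHull K ⊆ convexHull ℝ K := by
    intro p hp
    apply hp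
    constructor
    · intro t ht a ha b hb _
      exact (convex_convexHull ℝ K) ha hb (le_of_lt ht.1) (by linarith [ht.2]) (by ring)
    · exact subset_convexHull ℝ K
  have hco : convexHull ℝ K = {q : ℝ × ℝ | |q.1| + |q.2| ≤ 1} := by
    apply le_antisymm
    · exact convexHull_min hKball hballconv
    · exact fun p hp => hsub (hball hp)
  refine ⟨?_, le_antisymm hsub (hco ▸ hball), hco⟩
  ext ⟨x, y⟩
  simp only [diagSet, hKdef, mem_setOf_eq, mem_prod, mem_insert_iff, mem_singleton_iff]
  constructor
  · rintro ⟨h1, h2, h3⟩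
    have hx : |x| = 1/2 := by linarith
    have hy : |y| = 1/2 := by linarith
    rcases abs_eq (by norm_num : (0:ℝ) ≤ 1/2) |>.mp hx with hx' | hx' <;>
      rcases abs_eq (by norm_num : (0:ℝ) ≤ 1/2) |>.mp hy with hy' | hy' <;>
      norm_num [hx', hy']
  · rintro ⟨hx | hx, hy | hy⟩ <;> subst hx <;> subst hy <;> norm_num [abs_of_nonneg, abs_of_nonpos]
end
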